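/- arXiv:2406.01499 — 4 statements merged into one kernel-verified Lean document; each statement's English description precedes it below -/
import Mathlib

section
/- Let A = {p₁,p₂,p₃} be three non-collinear points in the grid [n]², and let s* be a positive integer. The number of grid points p such that {p,p₁,p₂,p₃} forms a trapezoid whose pair of parallel sides lie on lines ℓ₁,ℓ₂ with H(ℓ₁),H(ℓ₂) ≥ s* is at most C·n/s* for an absolute constant C. -/
def inGrid (n : ℕ) (p : ℤ × ℤ) : Prop :=
  1 ≤ p.1 ∧ p.1 ≤ n ∧ 1 ≤ p.2 ∧ p.2 ≤ n

def Collin (a b c : ℤ × ℤ) : Prop :=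
  (b.1 - a.1) * (c.2 - a.2) = (b.2 - a.2) * (c.1 - a.1)

def Par (u w : ℤ × ℤ) : Prop := u.1 * w.2 = u.2 * w.1

def NoThreeCollin (a b c d : ℤ × ℤ) : Prop :=
  ¬Collin a b c ∧ ¬Collin a b d ∧ ¬Collin a c d ∧ ¬Collin b c d

/-- `H` of the line through two distinct lattice points `a, b`: with the direction
`(b.1 - a.1, b.2 - a.2)` reduced by its gcd to `(v, u)` (so the slope is `u/v` in lowest
terms up to sign), `H = max(|u|, |v|)`. -/
def HLine (a b : ℤ × ℤ) : ℕ :=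
  max ((b.2 - a.2).natAbs / Int.gcd (b.1 - a.1) (b.2 - a.2))
      ((b.1 - a.1).natAbs / Int.gcd (b.1 - a.1) (b.2 - a.2))

/-- The four points form a trapezoid with the parallel pair of sides `{a,b}` and `{c,d}`. -/
def TrapPair (a b c d : ℤ × ℤ) : Prop :=
  NoThreeCollin a b c d ∧ Par (b - a) (d - c)

/-!
A point `p` completing `{p₁, p₂, p₃}` to a trapezoid lies on the line through some `pₘ`
parallel to the line through the other two points. If that line has primitive direction `d`
with `max |d₁| |d₂| = H ≥ s*`, then consecutive lattice points on it are `d` apart, so along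
it the grid `[n]²` contains at most `2 ⌊(n - 1) / s*⌋ + 1 ≤ 3n / s*` points. Summing over the
three choices of `pₘ` gives `C = 9`.
-/

lemma inGrid_finite (n : ℕ) : {p : ℤ × ℤ | inGrid n p}.Finite :=
  ((Set.finite_Icc 1 (n : ℤ)).prod (Set.finite_Icc 1 (n : ℤ))).subset
    fun _ ⟨h1, h2, h3, h4⟩ => ⟨⟨h1, h2⟩, ⟨h3, h4⟩⟩

lemma natAbs_sub_le_of_inGrid {n : ℕ} {p q : ℤ × ℤ} (hp : inGrid n p) (hq : inGrid n q) :
    (q.1 - p.1).natAbs ≤ n - 1 ∧ (q.2 - p.2).natAbs ≤ n - 1 := by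
  obtain ⟨_, _, _, _⟩ := hp
  obtain ⟨_, _, _, _⟩ := hq
  omega

lemma Par.of_smul_right {u d : ℤ × ℤ} {g : ℤ} (hg : g ≠ 0) (h : Par u (g • d)) : Par u d := by
  simp only [Par, Prod.smul_fst, Prod.smul_snd, smul_eq_mul] at h
  exact mul_left_cancel₀ hg (by linear_combination h)

lemma Par.exists_eq_smul {u d : ℤ × ℤ} (hd : IsCoprime d.1 d.2) (h : Par u d) :
    ∃ t : ℤ, u = t • d := by
  obtain ⟨a, b, hab⟩ := hd
  unfold Par at h
  refine ⟨a * u.1 + b * u.2, Prod.ext ?_ ?_⟩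
  · simp only [Prod.smul_fst, smul_eq_mul]
    linear_combination (-u.1) * hab + b * h
  · simp only [Prod.smul_snd, smul_eq_mul]
    linear_combination (-u.2) * hab - a * h

lemma HLine_eq_of_sub_eq_smul {a b d : ℤ × ℤ} {g : ℕ} (hg : 0 < g) (hd : Int.gcd d.1 d.2 = 1)
    (h : b - a = (g : ℤ) • d) : HLine a b = max d.2.natAbs d.1.natAbs := by
  have h1 : b.1 - a.1 = g * d.1 := congrArg Prod.fst h
  have h2 : b.2 - a.2 = g * d.2 := congrArg Prod.snd h
  simp only [HLine, h1, h2, Int.gcd_mul_left, hd, Int.natAbs_mul, Int.natAbs_natCast, mul_one,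
    Nat.mul_div_cancel_left _ hg]

lemma ncard_gridLine_le {n s : ℕ} {q d : ℤ × ℤ} (hq : inGrid n q) (hs : 0 < s) (hsn : s ≤ n)
    (hsd : s ≤ max d.2.natAbs d.1.natAbs) :
    ({p | inGrid n p ∧ ∃ t : ℤ, q - p = t • d}.ncard : ℝ) ≤ 3 * n / s := by
  set T := (n - 1) / s
  -- `|t| s ≤ |t| max |dᵢ| = max |qᵢ - pᵢ| ≤ n - 1`, so `|t| ≤ T`.
  have hsub : {p | inGrid n p ∧ ∃ t : ℤ, q - p = t • d} ⊆
      (fun t : ℤ => q - t • d) '' Set.Icc (-(T : ℤ)) T := by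
    rintro p ⟨hp, t, ht⟩
    have h1 : t.natAbs * d.1.natAbs = (q.1 - p.1).natAbs := by
      rw [← Int.natAbs_mul]; exact congrArg (Int.natAbs ∘ Prod.fst) ht.symm
    have h2 : t.natAbs * d.2.natAbs = (q.2 - p.2).natAbs := by
      rw [← Int.natAbs_mul]; exact congrArg (Int.natAbs ∘ Prod.snd) ht.symm
    have hts : t.natAbs * s ≤ n - 1 := by
      have hpq := natAbs_sub_le_of_inGrid hp hq
      rcases le_max_iff.mp hsd with h | h
      · exact (Nat.mul_le_mul_left _ h).trans (h2 ▸ hpq.2)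
      · exact (Nat.mul_le_mul_left _ h).trans (h1 ▸ hpq.1)
    have htT : t.natAbs ≤ T := (Nat.le_div_iff_mul_le hs).2 hts
    exact ⟨t, ⟨by omega, by omega⟩, by simp only [← ht, sub_sub_cancel]⟩
  have hcard : {p | inGrid n p ∧ ∃ t : ℤ, q - p = t • d}.ncard ≤ 2 * T + 1 :=
    calc _ ≤ ((fun t : ℤ => q - t • d) '' Set.Icc (-(T : ℤ)) T).ncard :=
          Set.ncard_le_ncard hsub ((Set.finite_Icc _ _).image _)
      _ ≤ (Set.Icc (-(T : ℤ)) T).ncard := Set.ncard_image_le (Set.finite_Icc _ _)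
      _ = 2 * T + 1 := by
          rw [← Finset.coe_Icc, Set.ncard_coe_finset, Int.card_Icc]; omega
  have hTs : (T : ℝ) * s ≤ n := by
    exact_mod_cast (Nat.div_mul_le_self (n - 1) s).trans (Nat.sub_le n 1)
  have hcard' : ({p | inGrid n p ∧ ∃ t : ℤ, q - p = t • d}.ncard : ℝ) ≤ 2 * T + 1 := by
    exact_mod_cast hcard
  have hsn' : (s : ℝ) ≤ n := by exact_mod_cast hsn
  rw [le_div_iff₀ (by positivity)]
  nlinarith

lemma ncard_parallel_through_le {n s : ℕ} {q a b : ℤ × ℤ} (hs : 0 < s)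
    (hq : inGrid n q) (ha : inGrid n a) (hb : inGrid n b) :
    ({p | inGrid n p ∧ Par (q - p) (b - a) ∧ s ≤ HLine a b}.ncard : ℝ) ≤ 3 * n / s := by
  rcases lt_or_ge (HLine a b) s with hH | hH
  · have hempty : {p | inGrid n p ∧ Par (q - p) (b - a) ∧ s ≤ HLine a b} = ∅ :=
      Set.eq_empty_of_forall_notMem fun _ hp => hp.2.2.not_gt hH
    rw [hempty, Set.ncard_empty, Nat.cast_zero]
    positivity
  have hgcd : 0 < Int.gcd (b.1 - a.1) (b.2 - a.2) := by
    by_contra h0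
    simp only [HLine, Nat.eq_zero_of_not_pos h0, Nat.div_zero, max_self] at hH
    omega
  obtain ⟨g, d₁, d₂, hg, hd, h1, h2⟩ := Int.exists_gcd_one' hgcd
  have hba : b - a = (g : ℤ) • (d₁, d₂) :=
    Prod.ext (h1.trans (mul_comm _ _)) (h2.trans (mul_comm _ _))
  have hHd := HLine_eq_of_sub_eq_smul hg hd hba
  have hsn : s ≤ n := by
    have hab := natAbs_sub_le_of_inGrid ha hb
    rw [h1, h2, Int.natAbs_mul, Int.natAbs_mul] at hab
    have := Nat.le_mul_of_pos_right d₁.natAbs hg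
    have := Nat.le_mul_of_pos_right d₂.natAbs hg
    simp only [Int.natAbs_natCast] at hab
    omega
  have hsub : {p | inGrid n p ∧ Par (q - p) (b - a) ∧ s ≤ HLine a b} ⊆
      {p | inGrid n p ∧ ∃ t : ℤ, q - p = t • (d₁, d₂)} := by
    rintro p ⟨hp, hpar, -⟩
    rw [hba] at hpar
    exact ⟨hp, (hpar.of_smul_right (by exact_mod_cast hg.ne')).exists_eq_smul
      (Int.isCoprime_iff_gcd_eq_one.2 hd)⟩
  calc _ ≤ ({p | inGrid n p ∧ ∃ t : ℤ, q - p = t • (d₁, d₂)}.ncard : ℝ) := by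
        exact_mod_cast Set.ncard_le_ncard hsub ((inGrid_finite n).subset fun _ hp => hp.1)
    _ ≤ 3 * n / s := ncard_gridLine_le hq hs hsn (hHd ▸ hH)

/-- For three non-collinear grid points `p₁,p₂,p₃` and a positive integer `s*`, the number of
grid points `p` such that `{p,p₁,p₂,p₃}` is a trapezoid whose parallel sides lie on lines of
`H`-value at least `s*` is at most `C·n/s*` for an absolute constant `C`. -/
theorem stmt3 :
    ∃ C : ℝ, 0 < C ∧ ∀ (n sstar : ℕ) (p₁ p₂ p₃ : ℤ × ℤ),
      0 < sstar →
      inGrid n p₁ → inGrid n p₂ → inGrid n p₃ →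
      ¬Collin p₁ p₂ p₃ →
      (({p : ℤ × ℤ | inGrid n p ∧
          ((TrapPair p p₁ p₂ p₃ ∧ sstar ≤ HLine p p₁ ∧ sstar ≤ HLine p₂ p₃) ∨
           (TrapPair p p₂ p₁ p₃ ∧ sstar ≤ HLine p p₂ ∧ sstar ≤ HLine p₁ p₃) ∨
           (TrapPair p p₃ p₁ p₂ ∧ sstar ≤ HLine p p₃ ∧ sstar ≤ HLine p₁ p₂))}.ncard : ℝ))
        ≤ C * n / sstar := by
  refine ⟨9, by norm_num, fun n s p₁ p₂ p₃ hs h₁ h₂ h₃ _ => ?_⟩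
  set L₁ := {p | inGrid n p ∧ Par (p₁ - p) (p₃ - p₂) ∧ s ≤ HLine p₂ p₃}
  set L₂ := {p | inGrid n p ∧ Par (p₂ - p) (p₃ - p₁) ∧ s ≤ HLine p₁ p₃}
  set L₃ := {p | inGrid n p ∧ Par (p₃ - p) (p₂ - p₁) ∧ s ≤ HLine p₁ p₂}
  have hsub : {p : ℤ × ℤ | inGrid n p ∧
      ((TrapPair p p₁ p₂ p₃ ∧ s ≤ HLine p p₁ ∧ s ≤ HLine p₂ p₃) ∨
       (TrapPair p p₂ p₁ p₃ ∧ s ≤ HLine p p₂ ∧ s ≤ HLine p₁ p₃) ∨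
       (TrapPair p p₃ p₁ p₂ ∧ s ≤ HLine p p₃ ∧ s ≤ HLine p₁ p₂))} ⊆ L₁ ∪ L₂ ∪ L₃ := by
    rintro p ⟨hp, ⟨⟨-, hpar⟩, -, hH⟩ | ⟨⟨-, hpar⟩, -, hH⟩ | ⟨⟨-, hpar⟩, -, hH⟩⟩
    exacts [Or.inl (Or.inl ⟨hp, hpar, hH⟩), Or.inl (Or.inr ⟨hp, hpar, hH⟩), Or.inr ⟨hp, hpar, hH⟩]
  have hfin : (L₁ ∪ L₂ ∪ L₃).Finite := (inGrid_finite n).subset fun _ hp => by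
    rcases hp with (hp | hp) | hp <;> exact hp.1
  have hcard := (Set.ncard_le_ncard hsub hfin).trans <| (Set.ncard_union_le _ _).trans <|
    Nat.add_le_add_right (Set.ncard_union_le L₁ L₂) _
  calc _ ≤ (L₁.ncard : ℝ) + L₂.ncard + L₃.ncard := by exact_mod_cast hcard
    _ ≤ 3 * n / s + 3 * n / s + 3 * n / s :=
        add_le_add (add_le_add (ncard_parallel_through_le hs h₁ h₂ h₃)
          (ncard_parallel_through_le hs h₂ h₁ h₃)) (ncard_parallel_through_le hs h₃ h₁ h₂)
    _ = 9 * n / s := by ring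
end

section
/- For any point p ∈ [n]², the number of collinear triples of grid points in [n]² containing p is at most C·n² log n for an absolute constant C. -/
/-!
Write a collinear triple through `p` as `{p, p + a • v, p + b • v}` with `v ≠ 0` and
`a, b ≠ 0`. If `v` has sup-norm `s`, then `|a| s, |b| s ≤ n - 1`. There are `8 s` vectors
of sup-norm `s` and at most `2 (n - 1) / s` admissible values for each of `a` and `b`, so the
number of triples is at most `∑_{s ≤ n} 8 s (2 n / s)² = 32 n² H_n = O(n² log n)`.
-/

open Finset

theorem exists_eq_smul_of_isCoprime {v e : ℤ × ℤ} (hv : IsCoprime v.1 v.2)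
    (h : v.1 * e.2 = v.2 * e.1) : ∃ c : ℤ, e = c • v := by
  obtain ⟨x, y, hxy⟩ := hv
  refine ⟨x * e.1 + y * e.2, Prod.ext ?_ ?_⟩ <;>
    simp only [Prod.smul_fst, Prod.smul_snd, smul_eq_mul]
  · linear_combination (-e.1) * hxy - y * h
  · linear_combination (-e.2) * hxy + x * h

theorem exists_isCoprime_smul_eq {d : ℤ × ℤ} (hd : d ≠ 0) :
    ∃ (g : ℤ) (v : ℤ × ℤ), IsCoprime v.1 v.2 ∧ d = g • v := by
  have hg : 0 < Int.gcd d.1 d.2 := Int.gcd_pos_iff.mpr <| by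
    by_contra! h
    exact hd (Prod.ext h.1 h.2)
  refine ⟨Int.gcd d.1 d.2, (d.1 / Int.gcd d.1 d.2, d.2 / Int.gcd d.1 d.2),
    Int.isCoprime_iff_gcd_eq_one.mpr (Int.gcd_div_gcd_div_gcd hg), Prod.ext ?_ ?_⟩
  · exact (Int.mul_ediv_cancel' (Int.gcd_dvd_left _ _)).symm
  · exact (Int.mul_ediv_cancel' (Int.gcd_dvd_right _ _)).symm

theorem exists_smul_eq_smul_of_cross_eq_zero {d e : ℤ × ℤ} (hd : d ≠ 0)
    (h : d.1 * e.2 = d.2 * e.1) : ∃ (v : ℤ × ℤ) (a b : ℤ), d = a • v ∧ e = b • v := by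
  obtain ⟨a, v, hv, rfl⟩ := exists_isCoprime_smul_eq hd
  have ha : a ≠ 0 := by rintro rfl; exact hd (zero_smul ℤ v)
  obtain ⟨b, rfl⟩ := exists_eq_smul_of_isCoprime hv <| mul_left_cancel₀ ha <| by
    simpa only [Prod.smul_fst, Prod.smul_snd, smul_eq_mul, mul_assoc] using h
  exact ⟨v, a, b, rfl, rfl⟩

theorem natAbs_max_smul (a : ℤ) (v : ℤ × ℤ) :
    max (a • v).1.natAbs (a • v).2.natAbs = a.natAbs * max v.1.natAbs v.2.natAbs := by
  simp only [Prod.smul_fst, Prod.smul_snd, smul_eq_mul, Int.natAbs_mul,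
    Nat.mul_max_mul_left]

noncomputable def multipliers (k : ℕ) : Finset ℤ := (Icc (-(k : ℤ)) k).erase 0

theorem card_multipliers (k : ℕ) : #(multipliers k) = 2 * k := by
  rw [multipliers, card_erase_of_mem (by simp), Int.card_Icc]
  omega

theorem mem_multipliers_div {m s : ℕ} {a : ℤ} (ha : a ≠ 0) (hs : 0 < s)
    (h : a.natAbs * s ≤ m) : a ∈ multipliers (m / s) := by
  have : a.natAbs ≤ m / s := (Nat.le_div_iff_mul_le hs).mpr h
  simp only [multipliers, mem_erase, mem_Icc]
  omega

/-- Mathlib's `box s` is the set of vectors of sup-norm exactly `s`. -/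
noncomputable def directionData (m : ℕ) : Finset ((_ : ℕ) × (ℤ × ℤ) × ℤ × ℤ) :=
  (Icc 1 m).sigma fun s => box s ×ˢ (multipliers (m / s) ×ˢ multipliers (m / s))

theorem mem_directionData {m : ℕ} {v : ℤ × ℤ} {a b : ℤ} (hv : v ≠ 0) (ha : a ≠ 0)
    (hb : b ≠ 0) (hav : max (a • v).1.natAbs (a • v).2.natAbs ≤ m)
    (hbv : max (b • v).1.natAbs (b • v).2.natAbs ≤ m) :
    ⟨max v.1.natAbs v.2.natAbs, v, a, b⟩ ∈ directionData m := by
  rw [natAbs_max_smul] at hav hbv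
  have hs : 0 < max v.1.natAbs v.2.natAbs := by
    rcases v with ⟨x, y⟩
    simp only [ne_eq, Prod.mk_eq_zero, not_and_or] at hv
    omega
  have hsm : max v.1.natAbs v.2.natAbs ≤ m :=
    (Nat.le_mul_of_pos_left _ (Int.natAbs_pos.mpr ha)).trans hav
  simp only [directionData, mem_sigma, mem_product, mem_Icc]
  exact ⟨⟨hs, hsm⟩, Int.mem_box.mpr rfl, mem_multipliers_div ha hs hav,
    mem_multipliers_div hb hs hbv⟩

theorem card_directionData (m : ℕ) :
    #(directionData m) = ∑ s ∈ Icc 1 m, 8 * s * (2 * (m / s) * (2 * (m / s))) := by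
  rw [directionData, card_sigma]
  refine sum_congr rfl fun s hs => ?_
  rw [card_product, card_product, card_multipliers, Int.card_box (by have := (mem_Icc.mp hs).1; omega)]

theorem card_directionData_le (m : ℕ) :
    (#(directionData m) : ℝ) ≤ 32 * m ^ 2 * (1 + Real.log m) := by
  have harmonic_le : ∑ s ∈ Icc 1 m, ((s : ℝ))⁻¹ ≤ 1 + Real.log m := by
    simpa [harmonic_eq_sum_Icc] using harmonic_le_one_add_log m
  have term_le : ∀ s ∈ Icc 1 m,
      ((8 * s * (2 * (m / s) * (2 * (m / s))) : ℕ) : ℝ) ≤ 32 * m ^ 2 * (s : ℝ)⁻¹ := by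
    intro s hs
    have hs0 : (0 : ℝ) < s := Nat.cast_pos.mpr (mem_Icc.mp hs).1
    have hdiv : ((m / s : ℕ) : ℝ) ≤ m / s := Nat.cast_div_le
    have hdiv0 : (0 : ℝ) ≤ ((m / s : ℕ) : ℝ) := Nat.cast_nonneg _
    calc ((8 * s * (2 * (m / s) * (2 * (m / s))) : ℕ) : ℝ)
        = 32 * s * ((m / s : ℕ) : ℝ) ^ 2 := by push_cast; ring
      _ ≤ 32 * s * ((m : ℝ) / s) ^ 2 := by gcongr
      _ = 32 * m ^ 2 * (s : ℝ)⁻¹ := by field_simp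
  calc (#(directionData m) : ℝ)
      ≤ ∑ s ∈ Icc 1 m, 32 * m ^ 2 * (s : ℝ)⁻¹ := by
        rw [card_directionData, Nat.cast_sum]
        exact sum_le_sum term_le
    _ ≤ 32 * m ^ 2 * (1 + Real.log m) := by
        rw [← mul_sum]
        gcongr

def collinearTriples (n : ℕ) (p : ℤ × ℤ) : Set (Finset (ℤ × ℤ)) :=
  {T : Finset (ℤ × ℤ) | p ∈ T ∧ (∀ q ∈ T, inGrid n q) ∧
    ∃ q r : ℤ × ℤ, T = {p, q, r} ∧ p ≠ q ∧ p ≠ r ∧ q ≠ r ∧ Collin p q r}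

theorem natAbs_max_sub_le {n : ℕ} {p q : ℤ × ℤ} (hp : inGrid n p) (hq : inGrid n q) :
    max (q - p).1.natAbs (q - p).2.natAbs ≤ n - 1 := by
  simp only [inGrid] at hp hq
  simp only [Prod.fst_sub, Prod.snd_sub]
  omega

theorem collinearTriples_subset_image {n : ℕ} {p : ℤ × ℤ} (hp : inGrid n p) :
    collinearTriples n p ⊆ (directionData (n - 1)).image
      fun x => ({p, p + x.2.2.1 • x.2.1, p + x.2.2.2 • x.2.1} : Finset (ℤ × ℤ)) := by
  rintro T ⟨-, hgrid, q, r, rfl, hpq, hpr, -, hcol⟩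
  have hq0 : q - p ≠ 0 := sub_ne_zero.mpr hpq.symm
  obtain ⟨v, a, b, hqa, hrb⟩ := exists_smul_eq_smul_of_cross_eq_zero (e := r - p) hq0 hcol
  have hv : v ≠ 0 := by rintro rfl; exact hq0 (by simpa using hqa)
  have ha : a ≠ 0 := by rintro rfl; exact hq0 (by simpa using hqa)
  have hb : b ≠ 0 := by rintro rfl; exact sub_ne_zero.mpr hpr.symm (by simpa using hrb)
  have hq_le := natAbs_max_sub_le hp (hgrid q (by simp))
  have hr_le := natAbs_max_sub_le hp (hgrid r (by simp))
  rw [hqa] at hq_le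
  rw [hrb] at hr_le
  refine mem_coe.mpr (mem_image.mpr ⟨_, mem_directionData hv ha hb hq_le hr_le, ?_⟩)
  simp only [← hqa, ← hrb, add_sub_cancel]

theorem ncard_collinearTriples_le {n : ℕ} {p : ℤ × ℤ} (hp : inGrid n p) :
    (collinearTriples n p).ncard ≤ #(directionData (n - 1)) :=
  (Set.ncard_le_ncard (collinearTriples_subset_image hp) (finite_toSet _)).trans <|
    (Set.ncard_coe_finset _).trans_le card_image_le

theorem pred_sq_mul_one_add_log_pred_le (n : ℕ) :
    ((n - 1 : ℕ) : ℝ) ^ 2 * (1 + Real.log (n - 1 : ℕ)) ≤ 3 * n ^ 2 * Real.log n := by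
  rcases Nat.lt_or_ge n 2 with hn | hn
  · interval_cases n <;> simp
  have hn' : (2 : ℝ) ≤ n := by exact_mod_cast hn
  have hpred : ((n - 1 : ℕ) : ℝ) ≤ n := by exact_mod_cast Nat.sub_le n 1
  have hlog_pred : Real.log (n - 1 : ℕ) ≤ Real.log n :=
    Real.log_le_log (Nat.cast_pos.mpr (by omega)) hpred
  have hlog : Real.log 2 ≤ Real.log n := Real.log_le_log (by norm_num) hn'
  calc ((n - 1 : ℕ) : ℝ) ^ 2 * (1 + Real.log (n - 1 : ℕ))
      ≤ (n : ℝ) ^ 2 * (3 * Real.log n) := by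
        gcongr
        linarith [Real.log_two_gt_d9]
    _ = 3 * n ^ 2 * Real.log n := by ring

/-- For any point `p ∈ [n]²`, the number of collinear triples of grid points containing `p`
is at most `C·n²·log n` for an absolute constant `C`. -/
theorem stmt5 :
    ∃ C : ℝ, 0 < C ∧ ∀ (n : ℕ) (p : ℤ × ℤ), inGrid n p →
      (({T : Finset (ℤ × ℤ) | p ∈ T ∧ (∀ q ∈ T, inGrid n q) ∧
          ∃ q r : ℤ × ℤ, T = {p, q, r} ∧ p ≠ q ∧ p ≠ r ∧ q ≠ r ∧
            Collin p q r}.ncard : ℝ))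
        ≤ C * n ^ 2 * Real.log n := by
  refine ⟨96, by norm_num, fun n p hp => ?_⟩
  calc ((collinearTriples n p).ncard : ℝ)
      ≤ #(directionData (n - 1)) := by exact_mod_cast ncard_collinearTriples_le hp
    _ ≤ 32 * ((n - 1 : ℕ) : ℝ) ^ 2 * (1 + Real.log (n - 1 : ℕ)) := card_directionData_le _
    _ ≤ 96 * n ^ 2 * Real.log n := by
        linarith [pred_sq_mul_one_add_log_pred_le n]
end

section
/- The number of collinear triples of grid points containing the origin o = (1,1) in [n]² is at least c·n² log n for some absolute constant c > 0 and n sufficiently large. -/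
/-!
For `0 < j < k` coprime and `v` a vector with positive first coordinate, `{o, o + j v, o + k v}`
is a collinear triple from which `(j, k, v)` can be read off. Put `K = ⌊(n - 1)/2⌋` and take
`v = (m, w)` with `1 ≤ w ≤ m ≤ K`, and `(j, k) = (a, a + b)` for a coprime pair `(a, b) ∈ [K/m]²`
(so that `j < k` is automatic and `gcd (j, k) = gcd (a, b)`); these triples lie in `[n]²`.
A union bound over common divisors `d ≥ 2`, with `∑_{d ≥ 2} 1/d² ≤ 11/12`, shows that at least
`N²/12` pairs in `[N]²` are coprime, so there are at least
`∑_{m ≤ K} m ⌊K/m⌋²/12 ≥ ∑_{m ≤ K} K²/(48 m) ≥ K² log (K + 1) / 48` such triples.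
-/

open Finset

def coprimePairs (N : ℕ) : Finset (ℕ × ℕ) :=
  {p ∈ Icc 1 N ×ˢ Icc 1 N | p.1.Coprime p.2}

lemma card_filter_dvd_and_dvd (N d : ℕ) :
    #{p ∈ Icc 1 N ×ˢ Icc 1 N | d ∣ p.1 ∧ d ∣ p.2} = (N / d) ^ 2 := by
  rw [filter_product, card_product, ← Nat.Ioc_filter_dvd_card_eq_div, sq]
  rfl

lemma card_filter_not_coprime_le (N : ℕ) :
    #{p ∈ Icc 1 N ×ˢ Icc 1 N | ¬ p.1.Coprime p.2} ≤ ∑ d ∈ Icc 2 N, (N / d) ^ 2 := by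
  calc _ ≤ #((Icc 2 N).biUnion fun d => {p ∈ Icc 1 N ×ˢ Icc 1 N | d ∣ p.1 ∧ d ∣ p.2}) := by
        refine card_le_card fun p hp => mem_biUnion.2 ⟨p.1.gcd p.2, ?_, ?_⟩
        · simp only [mem_filter, mem_product, mem_Icc] at hp
          have := Nat.gcd_le_left p.2 (by omega : 0 < p.1)
          have := Nat.gcd_pos_of_pos_left p.2 (by omega : 0 < p.1)
          simp only [mem_Icc, Nat.Coprime] at hp ⊢
          omega
        · simp only [mem_filter] at hp ⊢
          exact ⟨hp.1, Nat.gcd_dvd_left _ _, Nat.gcd_dvd_right _ _⟩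
    _ ≤ ∑ d ∈ Icc 2 N, #{p ∈ Icc 1 N ×ˢ Icc 1 N | d ∣ p.1 ∧ d ∣ p.2} := card_biUnion_le
    _ = ∑ d ∈ Icc 2 N, (N / d) ^ 2 := by simp only [card_filter_dvd_and_dvd]

lemma sum_Icc_two_inv_sq_le (N : ℕ) : ∑ d ∈ Icc 2 N, ((d : ℝ) ^ 2)⁻¹ ≤ 11 / 12 := by
  have hsub : Icc 2 N ⊆ insert 2 (Ioo 2 (N + 1)) := by
    intro d hd
    simp only [mem_Icc, mem_insert, mem_Ioo] at hd ⊢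
    omega
  calc _ ≤ ∑ d ∈ insert 2 (Ioo 2 (N + 1)), ((d : ℝ) ^ 2)⁻¹ :=
        sum_le_sum_of_subset_of_nonneg hsub fun _ _ _ => by positivity
    _ = 1 / 4 + ∑ d ∈ Ioo 2 (N + 1), ((d : ℝ) ^ 2)⁻¹ := by
        rw [sum_insert (by simp)]
        norm_num
    _ ≤ 1 / 4 + 2 / (2 + 1) := by gcongr; exact sum_Ioo_inv_sq_le 2 (N + 1)
    _ = 11 / 12 := by norm_num

lemma card_coprimePairs_ge (N : ℕ) : (N : ℝ) ^ 2 / 12 ≤ #(coprimePairs N) := by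
  have hsplit := card_filter_add_card_filter_not (s := Icc 1 N ×ˢ Icc 1 N)
    fun p : ℕ × ℕ => p.1.Coprime p.2
  rw [card_product, Nat.card_Icc, add_tsub_cancel_right, ← sq] at hsplit
  have hsplit' :
      (#(coprimePairs N) : ℝ) + #{p ∈ Icc 1 N ×ˢ Icc 1 N | ¬ p.1.Coprime p.2} = N ^ 2 := by
    exact_mod_cast hsplit
  have hbad : (#{p ∈ Icc 1 N ×ˢ Icc 1 N | ¬ p.1.Coprime p.2} : ℝ) ≤ 11 / 12 * N ^ 2 :=
    calc _ ≤ ∑ d ∈ Icc 2 N, ((N / d : ℕ) : ℝ) ^ 2 := by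
          exact_mod_cast card_filter_not_coprime_le N
      _ ≤ ∑ d ∈ Icc 2 N, ((N : ℝ) / d) ^ 2 := by
          gcongr
          exact Nat.cast_div_le
      _ = N ^ 2 * ∑ d ∈ Icc 2 N, ((d : ℝ) ^ 2)⁻¹ := by
          rw [mul_sum]
          exact sum_congr rfl fun d _ => by ring
      _ ≤ 11 / 12 * N ^ 2 := by
          rw [mul_comm]
          gcongr
          exact sum_Icc_two_inv_sq_le N
  linarith

lemma div_two_mul_le_cast_div {K m : ℕ} (hm : 0 < m) (hmK : m ≤ K) :
    (K : ℝ) / (2 * m) ≤ (K / m : ℕ) := by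
  have hlt : K < m * (K / m) + m := Nat.lt_mul_div_succ K hm
  have hle : m ≤ m * (K / m) := Nat.le_mul_of_pos_right m (Nat.div_pos hmK hm)
  have hK : K ≤ (K / m) * (2 * m) := by
    rw [show K / m * (2 * m) = 2 * (m * (K / m)) by ring]
    omega
  rw [div_le_iff₀ (by positivity)]
  exact_mod_cast hK

lemma sq_mul_log_le_sum_mul_div_sq (K : ℕ) :
    (K : ℝ) ^ 2 * Real.log (K + 1) / 4 ≤ ∑ m ∈ Icc 1 K, (m : ℝ) * ((K / m : ℕ) : ℝ) ^ 2 := by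
  have hterm : ∀ m ∈ Icc 1 K, (K : ℝ) ^ 2 / 4 * (m : ℝ)⁻¹ ≤ m * ((K / m : ℕ) : ℝ) ^ 2 := by
    intro m hm
    rw [mem_Icc] at hm
    have hm0 : (0 : ℝ) < m := by exact_mod_cast hm.1
    calc (K : ℝ) ^ 2 / 4 * (m : ℝ)⁻¹ = m * ((K : ℝ) / (2 * m)) ^ 2 := by field_simp; ring
      _ ≤ _ := by gcongr; exact div_two_mul_le_cast_div hm.1 hm.2
  have hharmonic := log_add_one_le_harmonic K
  rw [harmonic_eq_sum_Icc] at hharmonic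
  push_cast at hharmonic
  calc (K : ℝ) ^ 2 * Real.log (K + 1) / 4 ≤ (K : ℝ) ^ 2 / 4 * ∑ m ∈ Icc 1 K, (m : ℝ)⁻¹ := by
        rw [mul_div_right_comm]
        gcongr
    _ ≤ _ := by rw [mul_sum]; exact sum_le_sum hterm

lemma eq_of_nsmul_eq_nsmul_of_coprime {M : Type*} [AddCommGroup M] [IsAddTorsionFree M]
    {j k j' k' : ℕ} {v v' : M} (hj : j ≠ 0) (hv : v ≠ 0) (hc : j.Coprime k) (hc' : j'.Coprime k')
    (h₁ : j • v = j' • v') (h₂ : k • v = k' • v') : j = j' ∧ k = k' ∧ v = v' := by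
  have hcross : (j * k') • v = (j' * k) • v := by
    rw [mul_comm, mul_smul, h₁, smul_comm, ← h₂, mul_smul]
  have hcross : j * k' = j' * k := by
    have h0 : (((j * k' : ℕ) : ℤ) - (j' * k : ℕ)) • v = 0 := by
      rw [sub_smul, natCast_zsmul, natCast_zsmul, hcross, sub_self]
    have : ((j * k' : ℕ) : ℤ) - (j' * k : ℕ) = 0 := by simpa [hv] using h0
    omega
  have hjj : j = j' := Nat.dvd_antisymm
    (hc.dvd_of_dvd_mul_right ⟨k', by rw [hcross, mul_comm]⟩)
    (hc'.dvd_of_dvd_mul_right ⟨k, by rw [← hcross, mul_comm]⟩)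
  subst hjj
  exact ⟨rfl, (Nat.eq_of_mul_eq_mul_left (Nat.pos_of_ne_zero hj) hcross).symm,
    nsmul_right_injective hj h₁⟩

lemma eq_and_eq_of_insert_eq_insert {α β : Type*} [DecidableEq α] [LinearOrder β] (f : α → β)
    {o x y x' y' : α} (hx : x ≠ o) (hy : y ≠ o) (hx' : x' ≠ o) (hy' : y' ≠ o)
    (hxy : f x < f y) (hxy' : f x' < f y') (h : ({o, x, y} : Finset α) = {o, x', y'}) :
    x = x' ∧ y = y' := by
  have hxmem : x ∈ ({o, x', y'} : Finset α) := h ▸ by simp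
  have hymem : y ∈ ({o, x', y'} : Finset α) := h ▸ by simp
  simp only [mem_insert, mem_singleton, hx, hy, false_or] at hxmem hymem
  rcases hxmem with rfl | rfl <;> rcases hymem with rfl | rfl
  all_goals first | exact ⟨rfl, rfl⟩ | (exfalso; order)

def originTriples (n : ℕ) : Set (Finset (ℤ × ℤ)) :=
  {T : Finset (ℤ × ℤ) | ((1 : ℤ), (1 : ℤ)) ∈ T ∧ (∀ q ∈ T, inGrid n q) ∧
    ∃ q r : ℤ × ℤ, T = {((1 : ℤ), (1 : ℤ)), q, r} ∧ ((1 : ℤ), (1 : ℤ)) ≠ q ∧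
      ((1 : ℤ), (1 : ℤ)) ≠ r ∧ q ≠ r ∧ Collin ((1 : ℤ), (1 : ℤ)) q r}

lemma originTriples_finite (n : ℕ) : (originTriples n).Finite := by
  refine (Icc ((1 : ℤ), (1 : ℤ)) (n, n)).powerset.finite_toSet.subset fun T hT => ?_
  rw [mem_coe, mem_powerset]
  intro q hq
  obtain ⟨h₁, h₂, h₃, h₄⟩ := hT.2.1 q hq
  exact mem_Icc.2 ⟨⟨h₁, h₃⟩, h₂, h₄⟩

def lineTriple (v : ℤ × ℤ) (j k : ℕ) : Finset (ℤ × ℤ) :=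
  {(1, 1), (1, 1) + j • v, (1, 1) + k • v}

lemma lineTriple_mem_originTriples {n : ℕ} {v : ℤ × ℤ} {j k : ℕ} (hv₁ : 0 < v.1) (hv₂ : 0 ≤ v.2)
    (hj : 0 < j) (hjk : j < k) (hk₁ : k * v.1 < n) (hk₂ : k * v.2 < n) :
    lineTriple v j k ∈ originTriples n := by
  have hjv₁ : j * v.1 < k * v.1 := by gcongr
  have hjv₂ : j * v.2 ≤ k * v.2 := by gcongr
  have h0 : (0 : ℤ) < j * v.1 := by positivity
  refine ⟨by simp [lineTriple], ?_, _, _, rfl, ?_, ?_, ?_, ?_⟩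
  · simp only [lineTriple, mem_insert, mem_singleton]
    rintro q (rfl | rfl | rfl) <;>
      simp only [inGrid, Prod.fst_add, Prod.snd_add, Prod.smul_fst, Prod.smul_snd] <;>
      (try simp only [nsmul_eq_mul]) <;> refine ⟨?_, ?_, ?_, ?_⟩ <;> nlinarith
  all_goals simp only [ne_eq, Prod.ext_iff, Collin, Prod.fst_add, Prod.snd_add, Prod.smul_fst,
    Prod.smul_snd]
  all_goals simp only [nsmul_eq_mul]
  exacts [fun h => by linarith [h.1], fun h => by linarith [h.1], fun h => by linarith [h.1],
    by ring]

lemma fst_add_nsmul_lt_fst_add_nsmul {v : ℤ × ℤ} (hv : 0 < v.1) {a b : ℕ} (hab : a < b)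
    (p : ℤ × ℤ) : (p + a • v).1 < (p + b • v).1 := by
  simp only [Prod.fst_add, Prod.smul_fst]
  simp only [nsmul_eq_mul]
  gcongr

lemma add_nsmul_ne_self {v : ℤ × ℤ} (hv : 0 < v.1) {a : ℕ} (ha : 0 < a) (p : ℤ × ℤ) :
    p + a • v ≠ p := fun h =>
  (fst_add_nsmul_lt_fst_add_nsmul hv ha p).ne' (by rw [h, zero_smul, add_zero])

lemma lineTriple_inj {v v' : ℤ × ℤ} {j k j' k' : ℕ} (hv : 0 < v.1) (hv' : 0 < v'.1)
    (hj : 0 < j) (hj' : 0 < j') (hjk : j < k) (hjk' : j' < k') (hc : j.Coprime k)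
    (hc' : j'.Coprime k') (h : lineTriple v j k = lineTriple v' j' k') :
    j = j' ∧ k = k' ∧ v = v' := by
  obtain ⟨h₁, h₂⟩ := eq_and_eq_of_insert_eq_insert Prod.fst (add_nsmul_ne_self hv hj _)
    (add_nsmul_ne_self hv (hj.trans hjk) _) (add_nsmul_ne_self hv' hj' _)
    (add_nsmul_ne_self hv' (hj'.trans hjk') _) (fst_add_nsmul_lt_fst_add_nsmul hv hjk _)
    (fst_add_nsmul_lt_fst_add_nsmul hv' hjk' _) h
  exact eq_of_nsmul_eq_nsmul_of_coprime hj.ne' (fun h0 => hv.ne' (by rw [h0]; rfl)) hc hc'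
    (add_left_cancel h₁) (add_left_cancel h₂)

def tripleIndex (K : ℕ) : Finset ((ℕ × ℕ) × ℕ × ℕ) :=
  (Icc 1 K).biUnion fun m => ({m} ×ˢ Icc 1 m) ×ˢ coprimePairs (K / m)

lemma card_tripleIndex (K : ℕ) :
    #(tripleIndex K) = ∑ m ∈ Icc 1 K, m * #(coprimePairs (K / m)) := by
  rw [tripleIndex, card_biUnion]
  · simp [card_product]
  · intro m _ m' _ hm
    simp only [Function.onFun, disjoint_left, mem_product, mem_singleton]
    rintro x ⟨⟨rfl, -⟩, -⟩ ⟨⟨h, -⟩, -⟩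
    exact hm h

lemma card_tripleIndex_ge (K : ℕ) : (K : ℝ) ^ 2 * Real.log (K + 1) / 48 ≤ #(tripleIndex K) := by
  rw [card_tripleIndex]
  push_cast
  calc (K : ℝ) ^ 2 * Real.log (K + 1) / 48 = (K : ℝ) ^ 2 * Real.log (K + 1) / 4 / 12 := by ring
    _ ≤ (∑ m ∈ Icc 1 K, (m : ℝ) * ((K / m : ℕ) : ℝ) ^ 2) / 12 := by
        gcongr; exact sq_mul_log_le_sum_mul_div_sq K
    _ = ∑ m ∈ Icc 1 K, (m : ℝ) * (((K / m : ℕ) : ℝ) ^ 2 / 12) := by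
        rw [sum_div]; exact sum_congr rfl fun m _ => by ring
    _ ≤ _ := by gcongr; exact card_coprimePairs_ge _

def tripleOfIndex (x : (ℕ × ℕ) × ℕ × ℕ) : Finset (ℤ × ℤ) :=
  lineTriple (x.1.1, x.1.2) x.2.1 (x.2.1 + x.2.2)

lemma tripleOfIndex_mem_originTriples {n : ℕ} {x : (ℕ × ℕ) × ℕ × ℕ}
    (hx : x ∈ tripleIndex ((n - 1) / 2)) : tripleOfIndex x ∈ originTriples n := by
  obtain ⟨⟨m, w⟩, a, b⟩ := x
  simp only [tripleIndex, coprimePairs, mem_biUnion, mem_product, mem_singleton, mem_Icc,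
    mem_filter] at hx
  obtain ⟨m, ⟨hm, -⟩, ⟨rfl, hw, hw'⟩, ⟨⟨ha, ha'⟩, hb, hb'⟩, -⟩ := hx
  have hk : (a + b) * m < n := by
    have h₁ : (a + b) * m ≤ 2 * ((n - 1) / 2 / m * m) := by
      rw [← mul_assoc]
      exact Nat.mul_le_mul_right m (by omega)
    have h₂ := Nat.div_mul_le_self ((n - 1) / 2) m
    have h₃ : 0 < (a + b) * m := by positivity
    omega
  have hk' : (a + b) * w < n := (Nat.mul_le_mul_left _ hw').trans_lt hk
  dsimp only [tripleOfIndex]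
  apply lineTriple_mem_originTriples (by dsimp; omega) (by dsimp; omega) ha (by omega)
  · dsimp; exact_mod_cast hk
  · dsimp; exact_mod_cast hk'

lemma tripleOfIndex_injOn (K : ℕ) : Set.InjOn tripleOfIndex (tripleIndex K) := by
  rintro ⟨⟨m, w⟩, a, b⟩ hx ⟨⟨m', w'⟩, a', b'⟩ hx' h
  simp only [coe_biUnion, tripleIndex, coprimePairs, Set.mem_iUnion, mem_coe, mem_product,
    mem_singleton, mem_Icc, mem_filter] at hx hx'
  obtain ⟨_, ⟨hm, -⟩, ⟨rfl, -⟩, ⟨⟨ha, -⟩, hb, -⟩, hc⟩ := hx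
  obtain ⟨_, ⟨hm', -⟩, ⟨rfl, -⟩, ⟨⟨ha', -⟩, hb', -⟩, hc'⟩ := hx'
  dsimp only [tripleOfIndex] at h
  obtain ⟨rfl, hab, hv⟩ := lineTriple_inj (by dsimp; omega) (by dsimp; omega) ha ha' (by omega)
    (by omega) (Nat.coprime_self_add_right.2 hc) (Nat.coprime_self_add_right.2 hc') h
  simp only [Prod.mk.injEq, Nat.cast_inj] at hv
  obtain ⟨rfl, rfl⟩ := hv
  simp only [Prod.mk.injEq, true_and]
  omega

lemma sq_mul_log_div_le (n : ℕ) (hn : 4 ≤ n) :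
    (n : ℝ) ^ 2 * Real.log n / 32 ≤
      (((n - 1) / 2 : ℕ) : ℝ) ^ 2 * Real.log (((n - 1) / 2 : ℕ) + 1) := by
  set K := (n - 1) / 2
  have hK : (n : ℝ) ≤ 2 * K + 2 := by exact_mod_cast (by omega : n ≤ 2 * K + 2)
  have hn4 : (4 : ℝ) ≤ n := by exact_mod_cast hn
  have hlog : Real.log n ≤ 2 * Real.log (K + 1) := by
    calc Real.log n ≤ Real.log (((K : ℝ) + 1) ^ 2) :=
          Real.log_le_log (by positivity) (by nlinarith)
      _ = 2 * Real.log (K + 1) := by rw [Real.log_pow]; norm_num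
  have hlog0 : 0 ≤ Real.log n := Real.log_nonneg (by linarith)
  calc (n : ℝ) ^ 2 * Real.log n / 32 = ((n : ℝ) / 4) ^ 2 * (Real.log n / 2) := by ring
    _ ≤ (K : ℝ) ^ 2 * Real.log (K + 1) := by gcongr <;> linarith

/-- The number of collinear triples of grid points of `[n]²` containing the origin `o = (1,1)`
is at least `c·n²·log n` for an absolute constant `c > 0` and all sufficiently large `n`. -/
theorem stmt6 :
    ∃ c : ℝ, 0 < c ∧ ∃ N : ℕ, ∀ n : ℕ, N ≤ n →
      c * n ^ 2 * Real.log n ≤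
      ({T : Finset (ℤ × ℤ) | ((1 : ℤ), (1 : ℤ)) ∈ T ∧ (∀ q ∈ T, inGrid n q) ∧
          ∃ q r : ℤ × ℤ, T = {((1 : ℤ), (1 : ℤ)), q, r} ∧ ((1 : ℤ), (1 : ℤ)) ≠ q ∧
            ((1 : ℤ), (1 : ℤ)) ≠ r ∧ q ≠ r ∧ Collin ((1 : ℤ), (1 : ℤ)) q r}.ncard : ℝ) := by
  refine ⟨1 / 1536, by norm_num, 4, fun n hn => ?_⟩
  have hcount : #(tripleIndex ((n - 1) / 2)) ≤ (originTriples n).ncard := by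
    rw [← Set.ncard_coe_finset]
    exact Set.ncard_le_ncard_of_injOn _ (fun x hx => tripleOfIndex_mem_originTriples hx)
      (tripleOfIndex_injOn _) (originTriples_finite n)
  calc 1 / 1536 * (n : ℝ) ^ 2 * Real.log n = (n : ℝ) ^ 2 * Real.log n / 32 / 48 := by ring
    _ ≤ _ := by gcongr; exact sq_mul_log_div_le n hn
    _ ≤ #(tripleIndex ((n - 1) / 2)) := card_tripleIndex_ge _
    _ ≤ (originTriples n).ncard := by exact_mod_cast hcount
end

section
/- For any point p ∈ [n]², the number of trapezoids (4-element subsets of [n]² with two parallel sides through disjoint pairs) containing p is at most C·n⁴ log n for an absolute constant C. -/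
/-- Four points form a trapezoid: distinct, no three collinear, and the line through one
pair is parallel to the line through the complementary pair. -/
def IsTrapezoid (a b c d : ℤ × ℤ) : Prop :=
  a ≠ b ∧ a ≠ c ∧ a ≠ d ∧ b ≠ c ∧ b ≠ d ∧ c ≠ d ∧
  NoThreeCollin a b c d ∧
  (Par (b - a) (d - c) ∨ Par (c - a) (d - b) ∨ Par (d - a) (c - b))

/-!
Let `T = {p, a, b, c}` be a trapezoid with, say, `a - p ∥ c - b`. Writing both vectors as integer
multiples of the primitive vector `e` in their direction, `T = {p, p + s • e, b, b + k • e}`.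
If `e` has sup-norm `j`, then `1 ≤ j ≤ n - 1` and `|s|, |k| ≤ (n - 1) / j`, so for each `j` there
are `8 j` directions, at most `(3 n / j)²` multipliers and `n²` base points `b`, i.e. at most
`72 n⁴ / j` trapezoids. Summing over `j` gives `72 n⁴ H_{n-1} ≤ 216 n⁴ log n`.
-/

open Finset

namespace Trapezoid

lemma exists_smul_eq_of_par {u v : ℤ × ℤ} (h : Par u v) :
    ∃ (e : ℤ × ℤ) (s k : ℤ), u = s • e ∧ v = k • e := by
  rcases eq_or_ne u 0 with rfl | hu
  · exact ⟨v, 0, 1, by simp, by simp⟩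
  set g : ℤ := (Int.gcd u.1 u.2 : ℤ)
  have hg : 0 < Int.gcd u.1 u.2 :=
    Int.gcd_pos_iff.mpr (by simpa [Prod.ext_iff, or_iff_not_and_not] using hu)
  have h1 : g * (u.1 / g) = u.1 := Int.mul_ediv_cancel' (Int.gcd_dvd_left _ _)
  have h2 : g * (u.2 / g) = u.2 := Int.mul_ediv_cancel' (Int.gcd_dvd_right _ _)
  obtain ⟨x, y, hxy⟩ : IsCoprime (u.1 / g) (u.2 / g) :=
    Int.isCoprime_iff_gcd_eq_one.mpr (Int.gcd_div_gcd_div_gcd hg)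
  -- the Bézout coefficients of the primitive direction `u / g` read off the multiplier of `v`
  refine ⟨(u.1 / g, u.2 / g), g, x * v.1 + y * v.2, Prod.ext h1.symm h2.symm, ?_⟩
  have hcross : g * ((u.1 / g) * v.2 - (u.2 / g) * v.1) = 0 := by
    unfold Par at h; linear_combination h + v.2 * h1 - v.1 * h2
  have hcross' := (mul_eq_zero.mp hcross).resolve_left (by omega)
  refine Prod.ext ?_ ?_ <;> simp only [Prod.smul_mk, smul_eq_mul]
  · linear_combination (-v.1) * hxy - y * hcross'
  · linear_combination (-v.2) * hxy + x * hcross'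

lemma max_natAbs_smul (s : ℤ) (e : ℤ × ℤ) :
    max (s • e).1.natAbs (s • e).2.natAbs = s.natAbs * max e.1.natAbs e.2.natAbs := by
  simp [Int.natAbs_mul, Nat.mul_max_mul_left]

noncomputable def gridFinset (n : ℕ) : Finset (ℤ × ℤ) := Icc 1 (n : ℤ) ×ˢ Icc 1 (n : ℤ)

lemma mem_gridFinset {n : ℕ} {q : ℤ × ℤ} : q ∈ gridFinset n ↔ inGrid n q := by
  simp only [gridFinset, mem_product, mem_Icc, inGrid, and_assoc]

lemma card_gridFinset (n : ℕ) : #(gridFinset n) = n ^ 2 := by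
  simp [gridFinset, sq]

lemma max_natAbs_sub_le {n : ℕ} {x y : ℤ × ℤ} (hx : inGrid n x) (hy : inGrid n y) :
    max (x - y).1.natAbs (x - y).2.natAbs ≤ n - 1 := by
  obtain ⟨_, _, _, _⟩ := hx
  obtain ⟨_, _, _, _⟩ := hy
  simp only [Prod.fst_sub, Prod.snd_sub]
  omega

def quadOfParams (p : ℤ × ℤ) (x : (ℤ × ℤ) × ℤ × ℤ × (ℤ × ℤ)) : Finset (ℤ × ℤ) :=
  {p, p + x.2.1 • x.1, x.2.2.2, x.2.2.2 + x.2.2.1 • x.1}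

/-- Parameters `(e, s, k, b)` of `quadOfParams` with `e` of sup-norm `j`: coordinate differences
in `[n]²` are at most `n - 1`, hence so is `|s| * j`. -/
noncomputable def quadParams (n j : ℕ) : Finset ((ℤ × ℤ) × ℤ × ℤ × (ℤ × ℤ)) :=
  box j ×ˢ Icc (-(((n - 1) / j : ℕ) : ℤ)) ((n - 1) / j : ℕ) ×ˢ
    Icc (-(((n - 1) / j : ℕ) : ℤ)) ((n - 1) / j : ℕ) ×ˢ gridFinset n

lemma exists_mem_quadParams {n : ℕ} {p a b c : ℤ × ℤ} (hp : inGrid n p) (ha : inGrid n a)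
    (hb : inGrid n b) (hc : inGrid n c) (hap : a ≠ p) (hpar : Par (a - p) (c - b)) :
    ∃ j ∈ Icc 1 (n - 1), ∃ x ∈ quadParams n j, quadOfParams p x = {p, a, b, c} := by
  obtain ⟨e, s, k, hs, hk⟩ := exists_smul_eq_of_par hpar
  set j := max e.1.natAbs e.2.natAbs
  have hsj : s.natAbs * j ≤ n - 1 := by
    rw [← max_natAbs_smul, ← hs]; exact max_natAbs_sub_le ha hp
  have hkj : k.natAbs * j ≤ n - 1 := by
    rw [← max_natAbs_smul, ← hk]; exact max_natAbs_sub_le hc hb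
  obtain ⟨hs0, he0⟩ : s ≠ 0 ∧ e ≠ 0 := smul_ne_zero_iff.mp (hs ▸ sub_ne_zero.mpr hap)
  have hj : 1 ≤ j := Nat.one_le_iff_ne_zero.mpr
    (mt (eq_zero_iff_eq_zero_of_mem_box (Int.mem_box.mpr rfl)).mpr he0)
  have hjn : j ≤ n - 1 := (Nat.le_mul_of_pos_left j (Int.natAbs_pos.mpr hs0)).trans hsj
  refine ⟨j, mem_Icc.mpr ⟨hj, hjn⟩, (e, s, k, b), ?_, ?_⟩
  · have hs' := (Nat.le_div_iff_mul_le hj).mpr hsj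
    have hk' := (Nat.le_div_iff_mul_le hj).mpr hkj
    simp only [quadParams, mem_product, Int.mem_box, mem_Icc, mem_gridFinset]
    refine ⟨rfl, ⟨?_, ?_⟩, ⟨?_, ?_⟩, hb⟩ <;> omega
  · rw [quadOfParams, ← hs, ← hk, add_sub_cancel, add_sub_cancel]

lemma card_quadParams (n : ℕ) {j : ℕ} (hj : j ≠ 0) :
    #(quadParams n j) = 8 * j * (2 * ((n - 1) / j) + 1) ^ 2 * n ^ 2 := by
  simp only [quadParams, card_product, Int.card_box hj, Int.card_Icc, card_gridFinset]
  have hIcc : ((((n - 1) / j : ℕ) : ℤ) + 1 - -(((n - 1) / j : ℕ) : ℤ)).toNat =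
      2 * ((n - 1) / j) + 1 := by
    omega
  rw [hIcc]
  ring

lemma card_quadParams_le {n j : ℕ} (hj : 1 ≤ j) (hjn : j ≤ n) :
    (#(quadParams n j) : ℝ) ≤ 72 * n ^ 4 / j := by
  have hjR : (0 : ℝ) < j := by exact_mod_cast hj
  have hmult : (((n - 1) / j : ℕ) : ℝ) ≤ n / j :=
    Nat.cast_div_le.trans (by gcongr; exact_mod_cast Nat.sub_le n 1)
  have hone : (1 : ℝ) ≤ n / j := (one_le_div hjR).mpr (by exact_mod_cast hjn)
  rw [card_quadParams n (by omega)]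
  push_cast
  calc 8 * (j : ℝ) * (2 * (((n - 1) / j : ℕ) : ℝ) + 1) ^ 2 * (n : ℝ) ^ 2
      ≤ 8 * j * (3 * (n / j)) ^ 2 * (n : ℝ) ^ 2 := by gcongr; linarith
    _ = 72 * (n : ℝ) ^ 4 / j := by field_simp; ring

lemma harmonic_pred_le_three_mul_log (n : ℕ) : (harmonic (n - 1) : ℝ) ≤ 3 * Real.log n := by
  rcases le_or_gt n 1 with hn | hn
  · interval_cases n <;> simp
  have hlog2 : 1 / 2 < Real.log n :=
    (by linarith [Real.log_two_gt_d9] : (1 : ℝ) / 2 < Real.log 2).trans_le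
      (Real.log_le_log two_pos (by exact_mod_cast hn))
  have hlog : Real.log (n - 1 : ℕ) ≤ Real.log n :=
    Real.log_le_log (by norm_cast; omega) (by exact_mod_cast Nat.sub_le n 1)
  linarith [harmonic_le_one_add_log (n - 1)]

def trapezoidsThrough (n : ℕ) (p : ℤ × ℤ) : Set (Finset (ℤ × ℤ)) :=
  {T | p ∈ T ∧ (∀ q ∈ T, inGrid n q) ∧ ∃ a b c : ℤ × ℤ, T = {p, a, b, c} ∧ IsTrapezoid p a b c}

lemma trapezoidsThrough_subset (n : ℕ) (p : ℤ × ℤ) :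
    trapezoidsThrough n p ⊆ ((Icc 1 (n - 1)).biUnion (quadParams n)).image (quadOfParams p) := by
  rintro T ⟨-, hgrid, a, b, c, rfl, hpa, hpb, hpc, -, -, -, -, hpar⟩
  simp only [mem_insert, mem_singleton, forall_eq_or_imp, forall_eq] at hgrid
  obtain ⟨hp, ha, hb, hc⟩ := hgrid
  suffices ∃ j ∈ Icc 1 (n - 1), ∃ x ∈ quadParams n j, quadOfParams p x = {p, a, b, c} by
    obtain ⟨j, hj, x, hx, hxT⟩ := this
    exact mem_coe.mpr (mem_image.mpr ⟨x, mem_biUnion.mpr ⟨j, hj, hx⟩, hxT⟩)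
  rcases hpar with h | h | h
  · exact exists_mem_quadParams hp ha hb hc hpa.symm h
  · rw [insert_comm a b]
    exact exists_mem_quadParams hp hb ha hc hpb.symm h
  · rw [pair_comm b c, insert_comm a c]
    exact exists_mem_quadParams hp hc ha hb hpc.symm h

lemma ncard_trapezoidsThrough_le (n : ℕ) (p : ℤ × ℤ) :
    ((trapezoidsThrough n p).ncard : ℝ) ≤ 72 * n ^ 4 * harmonic (n - 1) := by
  calc ((trapezoidsThrough n p).ncard : ℝ)
      ≤ #(((Icc 1 (n - 1)).biUnion (quadParams n)).image (quadOfParams p)) := by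
        exact_mod_cast (Set.ncard_le_ncard (trapezoidsThrough_subset n p)
          (finite_toSet _)).trans_eq (Set.ncard_coe_finset _)
    _ ≤ ∑ j ∈ Icc 1 (n - 1), (#(quadParams n j) : ℝ) := by
        exact_mod_cast card_image_le.trans card_biUnion_le
    _ ≤ ∑ j ∈ Icc 1 (n - 1), 72 * (n : ℝ) ^ 4 / j :=
        sum_le_sum fun j hj => card_quadParams_le (mem_Icc.mp hj).1
          ((mem_Icc.mp hj).2.trans (Nat.sub_le n 1))
    _ = 72 * n ^ 4 * harmonic (n - 1) := by
        simp [harmonic_eq_sum_Icc, mul_sum, div_eq_mul_inv]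

end Trapezoid

/-- For any point `p ∈ [n]²`, the number of trapezoids of grid points containing `p`
is at most `C·n⁴·log n` for an absolute constant `C`. -/
theorem stmt7 :
    ∃ C : ℝ, 0 < C ∧ ∀ (n : ℕ) (p : ℤ × ℤ), inGrid n p →
      (({T : Finset (ℤ × ℤ) | p ∈ T ∧ (∀ q ∈ T, inGrid n q) ∧
          ∃ a b c : ℤ × ℤ, T = {p, a, b, c} ∧ IsTrapezoid p a b c}.ncard : ℝ))
        ≤ C * n ^ 4 * Real.log n := by
  refine ⟨216, by norm_num, fun n p _ => ?_⟩
  calc ((Trapezoid.trapezoidsThrough n p).ncard : ℝ)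
      ≤ 72 * n ^ 4 * harmonic (n - 1) := Trapezoid.ncard_trapezoidsThrough_le n p
    _ ≤ 72 * n ^ 4 * (3 * Real.log n) := by
        gcongr; exact Trapezoid.harmonic_pred_le_three_mul_log n
    _ = 216 * n ^ 4 * Real.log n := by ring
end
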